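/- Let J ⊆ Δ_af be a regular subset, w ∈ W, and β ∈ Φ⁺_J with w⁻¹β ∈ Φ⁻. Then the semi-affine length satisfies ᴶℓ(s_β w) < ᴶℓ(w), where ᴶℓ(u) := #{γ ∈ Φ⁺_J : u⁻¹γ ∈ Φ⁻}. -/

import Mathlib

open Classical

/-- A reduced crystallographic root system with a chosen positive system,
inside a `ℚ`-vector space `V`.  `pairing α β` is `⟨α^∨, β⟩`. -/
structure RootSystemData (V : Type*) [AddCommGroup V] [Module ℚ V] where
  Φ : Set V
  finite : Φ.Finite
  pairing : V → Module.Dual ℚ V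
  zero_not_mem : (0 : V) ∉ Φ
  neg_mem : ∀ α ∈ Φ, -α ∈ Φ
  pairing_self : ∀ α ∈ Φ, pairing α α = 2
  pairing_int : ∀ α ∈ Φ, ∀ β ∈ Φ, ∃ n : ℤ, pairing α β = (n : ℚ)
  reflect_mem : ∀ α ∈ Φ, ∀ β ∈ Φ, β - pairing α β • α ∈ Φ
  reduced : ∀ α ∈ Φ, ∀ c : ℚ, c • α ∈ Φ → c = 1 ∨ c = -1
  pos : Set V
  pos_sub : pos ⊆ Φ
  mem_pos_or_neg : ∀ α ∈ Φ, α ∈ pos ∨ -α ∈ pos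
  not_pos_and_neg : ∀ α ∈ pos, -α ∉ pos
  pos_add : ∀ α ∈ pos, ∀ β ∈ pos, α + β ∈ Φ → α + β ∈ pos

namespace RootSystemData

variable {V : Type*} [AddCommGroup V] [Module ℚ V] (R : RootSystemData V)

/-- The reflection `s_α` as a linear endomorphism of `V`. -/
noncomputable def refl (α : V) : Module.End ℚ V := 1 - (R.pairing α).smulRight α

/-- Indicator function `Φ⁺` of the positive roots. -/
noncomputable def ind (β : V) : ℤ := if β ∈ R.pos then 1 else 0

/-- `2ρ`, the sum of the positive roots. -/
noncomputable def twoRho : V := ∑ᶠ α ∈ R.pos, α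

/-- The length of a (Weyl group) element: the number of positive roots sent to
negative roots. -/
noncomputable def len (f : Module.End ℚ V) : ℕ := {α | α ∈ R.pos ∧ f α ∉ R.pos}.ncard

/-- `f` belongs to the Weyl group, i.e. is a product of reflections. -/
def IsWeyl (f : Module.End ℚ V) : Prop :=
  f ∈ Submonoid.closure {g : Module.End ℚ V | ∃ α ∈ R.pos, g = R.refl α}

/-- A quantum root: `ℓ(s_α) = ⟨α^∨, 2ρ⟩ - 1`. -/
def IsQuantumRoot (α : V) : Prop :=
  α ∈ R.pos ∧ (R.len (R.refl α) : ℚ) = R.pairing α R.twoRho - 1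

/-- Edges of the quantum Bruhat graph `QB(W)`, together with their weights:
a Bruhat edge `w → w s_α` of weight `0` when `ℓ(w s_α) = ℓ(w) + 1`, and a
quantum edge of weight `α^∨` when `ℓ(w s_α) = ℓ(w) + 1 - ⟨α^∨, 2ρ⟩`. -/
def Edge (u v : Module.End ℚ V) (ω : Module.Dual ℚ V) : Prop :=
  ∃ α ∈ R.pos, v = u * R.refl α ∧
    ((R.len v = R.len u + 1 ∧ ω = 0) ∨
     ((R.len v : ℚ) = (R.len u : ℚ) + 1 - R.pairing α R.twoRho ∧ ω = R.pairing α))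

/-- Paths in the quantum Bruhat graph; `Path R u v ω n` means there is a path
from `u` to `v` with `n` edges and total weight `ω`. -/
inductive Path (R : RootSystemData V) :
    Module.End ℚ V → Module.End ℚ V → Module.Dual ℚ V → ℕ → Prop
  | nil (u : Module.End ℚ V) : Path R u u 0 0
  | cons {u v w : Module.End ℚ V} {ω' ω : Module.Dual ℚ V} {n : ℕ} :
      R.Edge u v ω' → Path R v w ω n → Path R u w (ω' + ω) (n + 1)

/-- `ω` is the weight `wt(u ⇒ v)` of a shortest path from `u` to `v` in `QB(W)`. -/
def IsWt (u v : Module.End ℚ V) (ω : Module.Dual ℚ V) : Prop :=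
  ∃ n, R.Path u v ω n ∧ ∀ (m : ℕ) (ω' : Module.Dual ℚ V), R.Path u v ω' m → n ≤ m

/-- The distance `d(u ⇒ v)` in the quantum Bruhat graph. -/
noncomputable def qbDist (u v : Module.End ℚ V) : ℕ :=
  sInf {n | ∃ ω, R.Path u v ω n}

/-- The cone of nonnegative integral sums of positive coroots; `μ ≤ ν` in the
coroot lattice iff `ν - μ` lies in this cone. -/
def corootCone : AddSubmonoid (Module.Dual ℚ V) :=
  AddSubmonoid.closure {d | ∃ α ∈ R.pos, d = R.pairing α}

/-- The coroot lattice `ℤΦ^∨`. -/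
def corootLattice : AddSubgroup (Module.Dual ℚ V) :=
  AddSubgroup.closure {d | ∃ α ∈ R.pos, d = R.pairing α}


/-- A positive affine root `(α, k)`: `α ∈ Φ` and `k ≥ Φ⁺(-α)`. -/
def IsPosAff (a : V × ℤ) : Prop := a.1 ∈ R.Φ ∧ R.ind (-a.1) ≤ a.2

/-- A simple affine root: a positive affine root that is not a sum of two
positive affine roots (this characterizes `Δ_af`). -/
def IsSimpleAff (a : V × ℤ) : Prop :=
  R.IsPosAff a ∧ ¬ ∃ b c : V × ℤ, R.IsPosAff b ∧ R.IsPosAff c ∧ a = b + c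

/-- The affine reflection `r_{(α,k)}` acting on affine roots, realized as a
linear endomorphism of `V × ℚ`: `(β, t) ↦ (s_α β, t - k⟨α^∨, β⟩)`. -/
noncomputable def affRefl (a : V × ℤ) : Module.End ℚ (V × ℚ) :=
  LinearMap.prod ((R.refl a.1).comp (LinearMap.fst ℚ V ℚ))
    (LinearMap.snd ℚ V ℚ - (a.2 : ℚ) • ((R.pairing a.1).comp (LinearMap.fst ℚ V ℚ)))

/-- `K` is a regular subset of the simple affine roots `Δ_af`: the group
generated by the corresponding affine reflections is finite. -/
def IsRegularAff (K : Set (V × ℤ)) : Prop :=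
  (∀ a ∈ K, R.IsSimpleAff a) ∧
    Set.Finite ((Submonoid.closure {g : Module.End ℚ (V × ℚ) | ∃ a ∈ K, g = R.affRefl a} :
      Submonoid (Module.End ℚ (V × ℚ))) : Set (Module.End ℚ (V × ℚ)))

/-- The root subsystem `Φ_K` generated by the classical parts `cl(K)`. -/
def subSys (K : Set (V × ℤ)) : Set V :=
  {α | α ∈ R.Φ ∧ α ∈ (AddSubgroup.closure (Prod.fst '' K) : AddSubgroup V)}

/-- The positive roots `Φ⁺_K` of `Φ_K` with respect to the basis `cl(K)`:
roots that are nonnegative integral combinations of `cl(K)`. -/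
def subPos (K : Set (V × ℤ)) : Set V :=
  {α | α ∈ R.Φ ∧ α ∈ (AddSubmonoid.closure (Prod.fst '' K) : AddSubmonoid V)}

/-- `χ_K = Φ⁺ - Φ⁺_K`. -/
noncomputable def chi (K : Set (V × ℤ)) (α : V) : ℤ :=
  R.ind α - (if α ∈ R.subPos K then 1 else 0)

/-- The semi-affine length `ᴶℓ(u) = #{γ ∈ Φ⁺_J : u⁻¹γ ∈ Φ⁻}`, expressed in
terms of the inverse `finv = u⁻¹`. -/
noncomputable def semiAffLen (J : Set (V × ℤ)) (finv : Module.End ℚ V) : ℕ :=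
  {γ | γ ∈ R.subPos J ∧ finv γ ∉ R.pos}.ncard

/-!
For `γ ∈ Φ⁺_J` put `ψ γ = s_β γ` if this lies in `Φ⁺_J` and `ψ γ = γ` otherwise. Then `ψ` is an
involution of `Φ⁺_J` mapping the inversions of `s_β w` into those of `w` other than `β`. The one
non-formal case is `n = ⟨β^∨, γ⟩ ≥ 0`, where `w⁻¹γ = w⁻¹(s_β γ) + n • w⁻¹β` is minus a sum of
positive roots and hence negative, since a nonempty sum of positive roots never vanishes. That in
turn rests on `0 < ⟨β^∨, γ⟩⟨γ^∨, β⟩ < 4` for independent roots, which follows from the finite order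
of `s_γ s_β`. Regularity of `J` is used only to see that `β` and `-β` are not both in `Φ⁺_J`:
averaging over the finite group generated by the affine reflections of `J` yields a functional `F`
with `F α = -k` for `(α, k) ∈ J`, so `F ≤ 0` on `Φ⁺_J` with equality only on sums of positive roots.
-/

theorem _root_.nat_mul_abs_le_abs_of_linear_recurrence {K : Type*} [CommRing K] [LinearOrder K]
    [IsStrictOrderedRing K] {x : ℕ → K} {τ : K} (hτ : 2 ≤ |τ|)
    (hrec : ∀ j, x (j + 2) = τ * x (j + 1) - x j) (h0 : x 0 = 0) (j : ℕ) :
    j * |x 1| ≤ |x j| := by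
  have hstep : ∀ j, |x j| + |x 1| ≤ |x (j + 1)| := by
    intro j
    induction j with
    | zero => simp [h0]
    | succ n ih =>
      calc |x (n + 1)| + |x 1| ≤ 2 * |x (n + 1)| - |x n| := by linarith
        _ ≤ |τ| * |x (n + 1)| - |x n| := by gcongr
        _ = |τ * x (n + 1)| - |x n| := by rw [abs_mul]
        _ ≤ |τ * x (n + 1) - x n| := abs_sub_abs_le_abs_sub _ _
        _ = |x (n + 2)| := by rw [hrec]
  induction j with
  | zero => simp
  | succ n ih => push_cast; linarith [hstep n]

theorem _root_.Set.Finite.exists_iterate_eq_self {α : Type*} {s : Set α} {f : α → α}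
    (hs : s.Finite) (hf : Set.MapsTo f s s) (hinj : Set.InjOn f s) {x : α} (hx : x ∈ s) :
    ∃ n, 0 < n ∧ f^[n] x = x := by
  have := hs.to_subtype
  obtain ⟨n, hn, hper⟩ := (hf.restrict_inj.mpr hinj).mem_periodicPts ⟨x, hx⟩
  exact ⟨n, hn, by simpa [hf.coe_iterate_restrict] using congrArg Subtype.val hper⟩

theorem _root_.Set.Finite.mapsTo_of_leftInverse {α : Type*} {s : Set α} {f g : α → α}
    (hs : s.Finite) (hf : Set.MapsTo f s s) (hgf : Function.LeftInverse g f) :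
    Set.MapsTo g s s := by
  intro x hx
  obtain ⟨y, hy, rfl⟩ := ((hs.injOn_iff_bijOn_of_mapsTo hf).mp hgf.injective.injOn).surjOn hx
  rwa [hgf y]

theorem _root_.Submodule.exists_dual_apply_ne_zero_of_notMem_span_singleton {K W : Type*}
    [Field K] [AddCommGroup W] [Module K W] {x y : W} (h : x ∉ K ∙ y) :
    ∃ φ : Module.Dual K W, φ x ≠ 0 ∧ φ y = 0 := by
  obtain ⟨φ, hφx, hφy⟩ := Submodule.exists_dual_map_eq_bot_of_notMem h inferInstance
  refine ⟨φ, hφx, ?_⟩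
  have := Submodule.mem_map_of_mem (f := φ) (Submodule.mem_span_singleton_self y)
  rwa [hφy, Submodule.mem_bot] at this

open Set

theorem refl_apply (α x : V) : R.refl α x = x - R.pairing α x • α := by
  simp [refl]

theorem refl_refl {α : V} (hα : α ∈ R.Φ) (x : V) : R.refl α (R.refl α x) = x := by
  simp only [refl_apply, map_sub, map_smul, R.pairing_self α hα]
  module

theorem refl_self {α : V} (hα : α ∈ R.Φ) : R.refl α α = -α := by
  rw [refl_apply, R.pairing_self α hα]
  module

theorem mapsTo_refl {α : V} (hα : α ∈ R.Φ) : MapsTo (R.refl α) R.Φ R.Φ := fun x hx => by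
  rw [refl_apply]
  exact R.reflect_mem α hα x hx

theorem refl_mul_refl_apply_self {β γ : V} (hγ : γ ∈ R.Φ) :
    (R.refl γ * R.refl β) γ =
      (R.pairing β γ * R.pairing γ β - 1) • γ - R.pairing β γ • β := by
  simp only [Module.End.mul_apply, refl_apply, map_sub, map_smul, R.pairing_self γ hγ]
  module

-- Cayley–Hamilton for `s_γ s_β` on the plane of `β` and `γ`, where it has determinant `1`.
theorem refl_mul_refl_apply_apply_self {β γ : V} (hβ : β ∈ R.Φ) (hγ : γ ∈ R.Φ) :
    (R.refl γ * R.refl β) ((R.refl γ * R.refl β) γ) =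
      (R.pairing β γ * R.pairing γ β - 2) • (R.refl γ * R.refl β) γ - γ := by
  rw [R.refl_mul_refl_apply_self hγ]
  simp only [Module.End.mul_apply, refl_apply, map_sub, map_smul, R.pairing_self β hβ,
    R.pairing_self γ hγ]
  module

theorem pairing_mul_pairing_mem_Ioo {β γ : V} (hβ : β ∈ R.Φ) (hγ : γ ∈ R.Φ)
    (hind : β ∉ ℚ ∙ γ) (hk : R.pairing β γ ≠ 0) :
    R.pairing β γ * R.pairing γ β ∈ Ioo 0 4 := by
  have hNγ := R.refl_mul_refl_apply_self (β := β) hγ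
  have hCH := R.refl_mul_refl_apply_apply_self hβ hγ
  have hNinj : Function.LeftInverse (R.refl β * R.refl γ) (R.refl γ * R.refl β) := fun x => by
    simp only [Module.End.mul_apply, R.refl_refl hγ, R.refl_refl hβ]
  have hN : MapsTo (R.refl γ * R.refl β) R.Φ R.Φ := (R.mapsTo_refl hγ).comp (R.mapsTo_refl hβ)
  generalize R.refl γ * R.refl β = N at hNγ hCH hNinj hN
  set k := R.pairing β γ
  set m := R.pairing γ β
  obtain ⟨φ, hφβ, hφγ⟩ := Submodule.exists_dual_apply_ne_zero_of_notMem_span_singleton hind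
  obtain ⟨p, hp, hper⟩ := R.finite.exists_iterate_eq_self hN hNinj.injective.injOn hγ
  set x : ℕ → ℚ := fun j => φ ((N ^ j) γ)
  have hrec : ∀ j, x (j + 2) = (k * m - 2) * x (j + 1) - x j := by
    intro j
    simp only [x, pow_succ, Module.End.mul_apply, hCH, map_sub, map_smul, smul_eq_mul]
  have hx1 : x 1 = -k * φ β := by
    simp only [x, pow_one, hNγ, map_sub, map_smul, hφγ, smul_eq_mul]
    ring
  -- `x` vanishes at `0` and at the period `p` but not at `1`, which the recurrence forbids
  -- as soon as `|km - 2| ≥ 2`.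
  by_contra hkm
  have hτ : 2 ≤ |k * m - 2| := by
    by_contra! h
    exact hkm ⟨by linarith [(abs_lt.mp h).1], by linarith [(abs_lt.mp h).2]⟩
  have hbound := nat_mul_abs_le_abs_of_linear_recurrence hτ hrec (by simpa [x] using hφγ) p
  have hxp : x p = 0 := by simpa [x, Module.End.pow_apply, hper] using hφγ
  rw [hxp, abs_zero, hx1] at hbound
  have : 0 < (p : ℚ) * |-k * φ β| :=
    mul_pos (by exact_mod_cast hp) (abs_pos.mpr (mul_ne_zero (neg_ne_zero.mpr hk) hφβ))
  linarith

theorem sub_mem_of_pairing_pos {β γ : V} (hβ : β ∈ R.Φ) (hγ : γ ∈ R.Φ) (hne : γ ≠ β)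
    (hpos : 0 < R.pairing β γ) : γ - β ∈ R.Φ := by
  by_cases hind : β ∈ ℚ ∙ γ
  · obtain ⟨c, rfl⟩ := Submodule.mem_span_singleton.mp hind
    rcases R.reduced γ hγ c hβ with rfl | rfl
    · exact absurd (one_smul ℚ γ).symm hne
    · have : R.pairing ((-1 : ℚ) • γ) ((-1 : ℚ) • γ) = 2 := R.pairing_self _ hβ
      rw [map_smul, smul_eq_mul] at this
      linarith
  obtain ⟨a, ha⟩ := R.pairing_int β hβ γ hγ
  obtain ⟨b, hb⟩ := R.pairing_int γ hγ β hβ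
  have hab := R.pairing_mul_pairing_mem_Ioo hβ hγ hind hpos.ne'
  rw [ha, hb, mem_Ioo] at hab
  have hab0 : 0 < a * b := by exact_mod_cast hab.1
  have hab4 : a * b < 4 := by exact_mod_cast hab.2
  have ha0 : 0 < a := by exact_mod_cast ha ▸ hpos
  have : a = 1 ∨ b = 1 := by
    by_contra! h
    have : 0 < b := pos_of_mul_pos_right hab0 ha0.le
    have ha2 : 2 ≤ a := by omega
    have hb2 : 2 ≤ b := by omega
    nlinarith
  rcases this with rfl | rfl
  · simpa [ha] using R.reflect_mem β hβ γ hγ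
  · simpa [hb] using R.neg_mem _ (R.reflect_mem γ hγ β hβ)

-- The pairing with `α` forces some summand `x` with `α + x ∈ Φ⁺`, which shortens the sum.
theorem add_multiset_sum_ne_zero {α : V} (hα : α ∈ R.pos) (t : Multiset V)
    (ht : ∀ x ∈ t, x ∈ R.pos) : α + t.sum ≠ 0 := by
  intro hsum
  have hαΦ := R.pos_sub hα
  obtain ⟨x, hxt, hx⟩ : ∃ x ∈ t, R.pairing α x < 0 := by
    by_contra! hall
    have : 0 ≤ R.pairing α t.sum := by
      rw [map_multiset_sum]
      exact Multiset.sum_nonneg (by simpa using hall)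
    rw [eq_neg_of_add_eq_zero_right hsum, map_neg, R.pairing_self α hαΦ] at this
    norm_num at this
  have hxΦ := R.pos_sub (ht x hxt)
  have hne : -x ≠ α := by
    rintro rfl
    exact R.not_pos_and_neg _ hα (by simpa using ht _ hxt)
  have hroot : α + x ∈ R.Φ := by
    simpa [add_comm] using R.neg_mem _
      (R.sub_mem_of_pairing_pos hαΦ (R.neg_mem x hxΦ) hne (by simpa using hx))
  refine add_multiset_sum_ne_zero (R.pos_add α hα x (ht x hxt) hroot) (t.erase x)
    (fun y hy => ht y (Multiset.mem_of_mem_erase hy)) ?_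
  rw [add_assoc, Multiset.sum_erase hxt, hsum]
termination_by Multiset.card t
decreasing_by exact Multiset.card_erase_lt_of_mem hxt

theorem eq_zero_of_mem_closure_pos {x : V} (hx : x ∈ AddSubmonoid.closure R.pos)
    (hnx : -x ∈ AddSubmonoid.closure R.pos) : x = 0 := by
  obtain ⟨s, hs, rfl⟩ := AddSubmonoid.exists_multiset_of_mem_closure hx
  obtain ⟨t, ht, hts⟩ := AddSubmonoid.exists_multiset_of_mem_closure hnx
  rcases s.empty_or_exists_mem with rfl | ⟨α, hα⟩
  · simp
  refine absurd ?_ (R.add_multiset_sum_ne_zero (hs α hα) (s.erase α + t) ?_)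
  · rw [Multiset.sum_add, ← add_assoc, Multiset.sum_erase hα, hts, add_neg_cancel]
  · intro y hy
    rcases Multiset.mem_add.mp hy with hy | hy
    exacts [hs y (Multiset.mem_of_mem_erase hy), ht y hy]

theorem affRefl_apply (a : V × ℤ) (x : V × ℚ) :
    R.affRefl a x = (R.refl a.1 x.1, x.2 - a.2 * R.pairing a.1 x.1) := by
  simp [affRefl]

theorem affRefl_mul_self {a : V × ℤ} (ha : a.1 ∈ R.Φ) : R.affRefl a * R.affRefl a = 1 := by
  refine LinearMap.ext fun x => ?_
  rw [Module.End.mul_apply, affRefl_apply, affRefl_apply, R.refl_refl ha, refl_apply, map_sub,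
    map_smul, R.pairing_self _ ha, smul_eq_mul, Module.End.one_apply]
  ext <;> simp only; ring

theorem exists_dual_affRefl_invariant {J : Set (V × ℤ)} (hJ : R.IsRegularAff J) :
    ∃ Ψ : Module.Dual ℚ (V × ℚ), Ψ (0, 1) = 1 ∧ ∀ a ∈ J, ∀ x, Ψ (R.affRefl a x) = Ψ x := by
  set G := Submonoid.closure {g : Module.End ℚ (V × ℚ) | ∃ a ∈ J, g = R.affRefl a}
  have hfix : ∀ g ∈ G, ∀ t : ℚ, g (0, t) = (0, t) := by
    intro g hg
    induction hg using Submonoid.closure_induction with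
    | mem g hg => obtain ⟨a, -, rfl⟩ := hg; intro t; simp [affRefl_apply]
    | one => simp
    | mul g h _ _ hg hh => intro t; rw [Module.End.mul_apply, hh, hg]
  set S := hJ.2.toFinset
  have hS : ∀ g, g ∈ S ↔ g ∈ G := fun g => hJ.2.mem_toFinset
  have hcard : (S.card : ℚ) ≠ 0 :=
    Nat.cast_ne_zero.mpr (Finset.card_ne_zero_of_mem ((hS 1).mpr (one_mem G)))
  refine ⟨(S.card : ℚ)⁻¹ • ∑ g ∈ S, LinearMap.snd ℚ V ℚ ∘ₗ g, ?_, fun a ha x => ?_⟩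
  · rw [LinearMap.smul_apply, LinearMap.sum_apply, Finset.sum_congr rfl fun g hg => by
      rw [LinearMap.comp_apply, hfix g ((hS g).mp hg)]]
    simp [hcard]
  have hmem : ∀ g ∈ S, g * R.affRefl a ∈ S := fun g hg =>
    (hS _).mpr (mul_mem ((hS g).mp hg) (Submonoid.subset_closure ⟨a, ha, rfl⟩))
  have hrr := R.affRefl_mul_self (hJ.1 a ha).1.1
  simp only [LinearMap.smul_apply, LinearMap.sum_apply, LinearMap.comp_apply]
  congr 1
  exact Finset.sum_nbij' (· * R.affRefl a) (· * R.affRefl a) hmem hmem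
    (fun g _ => by rw [mul_assoc, hrr, mul_one]) (fun g _ => by rw [mul_assoc, hrr, mul_one])
    (fun g _ => rfl)

-- `F` is evaluation at a point lying on all the reflecting hyperplanes of `J`.
theorem exists_dual_of_isRegularAff {J : Set (V × ℤ)} (hJ : R.IsRegularAff J) :
    ∃ F : Module.Dual ℚ V, ∀ a ∈ J, F a.1 = -a.2 := by
  obtain ⟨Ψ, hΨ1, hΨ⟩ := R.exists_dual_affRefl_invariant hJ
  refine ⟨Ψ ∘ₗ LinearMap.inl ℚ V ℚ, fun a ha => ?_⟩
  have hΦ := (hJ.1 a ha).1.1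
  have hra : R.affRefl a (a.1, 0) = -(a.1, 0) + (-2 * a.2 : ℚ) • ((0 : V), (1 : ℚ)) := by
    rw [affRefl_apply, R.refl_self hΦ, R.pairing_self _ hΦ]
    ext <;> simp [mul_comm]
  have h := hΨ a ha (a.1, 0)
  rw [hra, map_add, map_neg, map_smul, hΨ1, smul_eq_mul] at h
  simp only [LinearMap.comp_apply, LinearMap.inl_apply]
  linarith

theorem dual_nonpos_of_mem_closure {J : Set (V × ℤ)} (hJ : ∀ a ∈ J, R.IsPosAff a)
    {F : Module.Dual ℚ V} (hF : ∀ a ∈ J, F a.1 = -a.2) {x : V}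
    (hx : x ∈ AddSubmonoid.closure (Prod.fst '' J)) :
    F x ≤ 0 ∧ (F x = 0 → x ∈ AddSubmonoid.closure R.pos) := by
  induction hx using AddSubmonoid.closure_induction with
  | mem y hy =>
    obtain ⟨a, ha, rfl⟩ := hy
    have hind : 0 ≤ R.ind (-a.1) := by unfold ind; split_ifs <;> norm_num
    have hk : 0 ≤ a.2 := hind.trans (hJ a ha).2
    rw [hF a ha, neg_nonpos, neg_eq_zero, Int.cast_eq_zero]
    refine ⟨by exact_mod_cast hk, fun h0 => AddSubmonoid.subset_closure ?_⟩
    refine (R.mem_pos_or_neg _ (hJ a ha).1).resolve_right fun hneg => ?_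
    have := (hJ a ha).2
    simp [ind, hneg, h0] at this
  | zero => simp
  | add x y _ _ hx hy =>
    rw [map_add]
    refine ⟨by linarith [hx.1, hy.1], fun h0 => add_mem (hx.2 (by linarith [hx.1, hy.1]))
      (hy.2 (by linarith [hx.1, hy.1]))⟩

theorem neg_notMem_subPos {J : Set (V × ℤ)} (hJ : R.IsRegularAff J) {β : V}
    (hβ : β ∈ R.subPos J) : -β ∉ R.subPos J := by
  intro hnβ
  obtain ⟨F, hF⟩ := R.exists_dual_of_isRegularAff hJ
  have hpos : ∀ a ∈ J, R.IsPosAff a := fun a ha => (hJ.1 a ha).1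
  obtain ⟨h1, h1'⟩ := R.dual_nonpos_of_mem_closure hpos hF hβ.2
  obtain ⟨h2, h2'⟩ := R.dual_nonpos_of_mem_closure hpos hF hnβ.2
  rw [map_neg] at h2 h2'
  have hF0 : F β = 0 := by linarith
  have := R.eq_zero_of_mem_closure_pos (h1' hF0) (h2' (by rw [hF0, neg_zero]))
  exact R.zero_not_mem (this ▸ hβ.1)

theorem neg_mem_pos {x : V} (hx : x ∈ R.Φ) (hxn : x ∉ R.pos) : -x ∈ R.pos :=
  (R.mem_pos_or_neg x hx).resolve_left hxn

theorem exists_nat_pairing_eq_or_neg {β γ : V} (hβ : β ∈ R.Φ) (hγ : γ ∈ R.Φ) :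
    ∃ n : ℕ, R.pairing β γ = n ∨ R.pairing β γ = -n := by
  obtain ⟨m, hm⟩ := R.pairing_int β hβ γ hγ
  obtain ⟨n, rfl | rfl⟩ := Int.eq_nat_or_neg m
  exacts [⟨n, Or.inl (by simp [hm])⟩, ⟨n, Or.inr (by simp [hm])⟩]

theorem refl_mem_subPos_of_pairing_eq_neg {J : Set (V × ℤ)} {β γ : V} (hβ : β ∈ R.subPos J)
    (hγ : γ ∈ R.subPos J) {n : ℕ} (hn : R.pairing β γ = -n) : R.refl β γ ∈ R.subPos J := by
  have hs : R.refl β γ = γ + n • β := by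
    rw [refl_apply, hn, neg_smul, sub_neg_eq_add, Nat.cast_smul_eq_nsmul]
  exact ⟨R.mapsTo_refl hβ.1 hγ.1, hs ▸ add_mem hγ.2 (nsmul_mem hβ.2 n)⟩

theorem notMem_pos_of_refl_notMem_pos {f : Module.End ℚ V} (hf : MapsTo f R.Φ R.Φ) {β γ : V}
    (hβ : β ∈ R.Φ) (hγ : γ ∈ R.Φ) (hfβ : f β ∉ R.pos) (hfγ : f (R.refl β γ) ∉ R.pos) {n : ℕ}
    (hn : R.pairing β γ = n) : f γ ∉ R.pos := by
  intro hpos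
  have hs : γ = R.refl β γ + n • β := by
    rw [refl_apply, hn, Nat.cast_smul_eq_nsmul, sub_add_cancel]
  have hneg : -f γ ∈ AddSubmonoid.closure R.pos := by
    rw [hs, map_add, map_nsmul, neg_add, ← smul_neg]
    exact add_mem (AddSubmonoid.subset_closure (R.neg_mem_pos (hf (R.mapsTo_refl hβ hγ)) hfγ))
      (nsmul_mem (AddSubmonoid.subset_closure (R.neg_mem_pos (hf hβ) hfβ)) n)
  have := R.eq_zero_of_mem_closure_pos (AddSubmonoid.subset_closure hpos) hneg
  exact R.zero_not_mem (this ▸ hf hγ)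

theorem semiAffLen_mul_refl_lt {J : Set (V × ℤ)} (hJ : R.IsRegularAff J)
    {f : Module.End ℚ V} (hf : MapsTo f R.Φ R.Φ) {β : V} (hβ : β ∈ R.subPos J)
    (hfβ : f β ∉ R.pos) : R.semiAffLen J (f * R.refl β) < R.semiAffLen J f := by
  have hβΦ := hβ.1
  set ψ : V → V := fun γ => if R.refl β γ ∈ R.subPos J then R.refl β γ else γ
  have hψψ : LeftInvOn ψ ψ (R.subPos J) := fun γ hγ => by
    by_cases h : R.refl β γ ∈ R.subPos J
    · simp [ψ, h, R.refl_refl hβΦ, hγ]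
    · simp [ψ, h]
  have hfin : {γ | γ ∈ R.subPos J ∧ f γ ∉ R.pos}.Finite := R.finite.subset fun γ hγ => hγ.1.1
  refine (ncard_le_ncard_of_injOn ψ ?_ (hψψ.injOn.mono fun γ hγ => hγ.1) hfin.sdiff).trans_lt
    (ncard_sdiff_singleton_lt_of_mem ⟨hβ, hfβ⟩ hfin)
  rintro γ ⟨hγ, hfγ⟩
  rw [Module.End.mul_apply] at hfγ
  by_cases h : R.refl β γ ∈ R.subPos J
  · simp only [ψ, if_pos h]
    refine ⟨⟨h, hfγ⟩, fun hsβ => R.neg_notMem_subPos hJ hβ ?_⟩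
    rwa [← R.refl_refl hβΦ γ, show R.refl β γ = β from hsβ, R.refl_self hβΦ] at hγ
  · simp only [ψ, if_neg h]
    refine ⟨⟨hγ, ?_⟩, ?_⟩
    · obtain ⟨n, hn | hn⟩ := R.exists_nat_pairing_eq_or_neg hβΦ hγ.1
      · exact R.notMem_pos_of_refl_notMem_pos hf hβΦ hγ.1 hfβ hfγ hn
      · exact absurd (R.refl_mem_subPos_of_pairing_eq_neg hβ hγ hn) h
    · rintro (rfl : γ = β)
      rw [R.refl_self hβΦ, map_neg] at hfγ
      exact hfγ (R.neg_mem_pos (hf hβΦ) hfβ)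

theorem mapsTo_of_isWeyl {w : Module.End ℚ V} (hw : R.IsWeyl w) : MapsTo w R.Φ R.Φ := by
  induction hw using Submonoid.closure_induction with
  | mem g hg => obtain ⟨α, hα, rfl⟩ := hg; exact R.mapsTo_refl (R.pos_sub hα)
  | one => exact mapsTo_id _
  | mul g h _ _ hg hh => exact hg.comp hh

theorem semiAffLen_lt (J : Set (V × ℤ)) (hJ : R.IsRegularAff J)
    (w winv : Module.End ℚ V) (hw : R.IsWeyl w)
    (h₂ : winv * w = 1) (β : V) (hβ : β ∈ R.subPos J) (hneg : winv β ∉ R.pos) :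
    R.semiAffLen J (winv * R.refl β) < R.semiAffLen J winv := by
  have hwinv : MapsTo winv R.Φ R.Φ := R.finite.mapsTo_of_leftInverse (R.mapsTo_of_isWeyl hw)
    fun x => by rw [← Module.End.mul_apply, h₂, Module.End.one_apply]
  exact R.semiAffLen_mul_refl_lt hJ hwinv hβ hneg

end RootSystemData
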